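/- The function y(x) defined implicitly by y^2 + x(x-1)^3 = 0 (on an interval where this defines a smooth real branch) satisfies the 7th order ODE 10(y''')^3 y^(7) - 70(y''')^2 y'''' y^(6) - 49(y''')^2 (y^(5))^2 + 280 y''' (y'''')^2 y^(5) - 175 (y'''')^4 = 0. -/

import Mathlib

/-- The 7th order ODE expression E[y] at a point `x`, with derivatives taken within `s`. -/
noncomputable def Eode (y : ℝ → ℝ) (s : Set ℝ) (x : ℝ) : ℝ :=
  10 * (iteratedDerivWithin 3 y s x) ^ 3 * iteratedDerivWithin 7 y s x
  - 70 * (iteratedDerivWithin 3 y s x) ^ 2 * iteratedDerivWithin 4 y s x *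
      iteratedDerivWithin 6 y s x
  - 49 * (iteratedDerivWithin 3 y s x) ^ 2 * (iteratedDerivWithin 5 y s x) ^ 2
  + 280 * iteratedDerivWithin 3 y s x * (iteratedDerivWithin 4 y s x) ^ 2 *
      iteratedDerivWithin 5 y s x
  - 175 * (iteratedDerivWithin 4 y s x) ^ 4

open Set Filter

noncomputable def Rp1 (x : ℝ) : ℝ := (1/2 : ℝ) + (-3 : ℝ) * x ^ 1 + (9/2 : ℝ) * x ^ 2 + (-2 : ℝ) * x ^ 3

noncomputable def Rp2 (x : ℝ) : ℝ := (-1/4 : ℝ) + (9/2 : ℝ) * x ^ 2 + (-13 : ℝ) * x ^ 3 + (63/4 : ℝ) * x ^ 4 + (-9 : ℝ) * x ^ 5 + (2 : ℝ) * x ^ 6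

noncomputable def Rp3 (x : ℝ) : ℝ := (3/8 : ℝ) + (-9/4 : ℝ) * x ^ 1 + (45/8 : ℝ) * x ^ 2 + (-15/2 : ℝ) * x ^ 3 + (45/8 : ℝ) * x ^ 4 + (-9/4 : ℝ) * x ^ 5 + (3/8 : ℝ) * x ^ 6

noncomputable def Rp4 (x : ℝ) : ℝ := (-15/16 : ℝ) + (9 : ℝ) * x ^ 1 + (-153/4 : ℝ) * x ^ 2 + (189/2 : ℝ) * x ^ 3 + (-1197/8 : ℝ) * x ^ 4 + (315/2 : ℝ) * x ^ 5 + (-441/4 : ℝ) * x ^ 6 + (99/2 : ℝ) * x ^ 7 + (-207/16 : ℝ) * x ^ 8 + (3/2 : ℝ) * x ^ 9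

noncomputable def Rp5 (x : ℝ) : ℝ := (105/32 : ℝ) + (-675/16 : ℝ) * x ^ 1 + (7965/32 : ℝ) * x ^ 2 + (-7125/8 : ℝ) * x ^ 3 + (34425/16 : ℝ) * x ^ 4 + (-29565/8 : ℝ) * x ^ 5 + (74025/16 : ℝ) * x ^ 6 + (-8505/2 : ℝ) * x ^ 7 + (91125/32 : ℝ) * x ^ 8 + (-21675/16 : ℝ) * x ^ 9 + (13905/32 : ℝ) * x ^ 10 + (-675/8 : ℝ) * x ^ 11 + (15/2 : ℝ) * x ^ 12

noncomputable def Rp6 (x : ℝ) : ℝ := (-945/64 : ℝ) + (945/4 : ℝ) * x ^ 1 + (-56565/32 : ℝ) * x ^ 2 + (131265/16 : ℝ) * x ^ 3 + (-1690335/64 : ℝ) * x ^ 4 + (999405/16 : ℝ) * x ^ 5 + (-1793385/16 : ℝ) * x ^ 6 + (1242945/8 : ℝ) * x ^ 7 + (-10732095/64 : ℝ) * x ^ 8 + (1127115/8 : ℝ) * x ^ 9 + (-2923965/32 : ℝ) * x ^ 10 + (718605/16 : ℝ) * x ^ 11 + (-1036305/64 : ℝ) * x ^ 12 + (64665/16 :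 ℝ) * x ^ 13 + (-4995/8 : ℝ) * x ^ 14 + (45 : ℝ) * x ^ 15

noncomputable def Rp7 (x : ℝ) : ℝ := (10395/128 : ℝ) + (-99225/64 : ℝ) * x ^ 1 + (1792665/128 : ℝ) * x ^ 2 + (-2545515/32 : ℝ) * x ^ 3 + (40751235/128 : ℝ) * x ^ 4 + (-61023375/64 : ℝ) * x ^ 5 + (283468185/128 : ℝ) * x ^ 6 + (-4078620 : ℝ) * x ^ 7 + (772837065/128 : ℝ) * x ^ 8 + (-463197735/64 : ℝ) * x ^ 9 + (901215315/128 : ℝ) * x ^ 10 + (-177432255/32 : ℝ) * x ^ 11 + (449037225/128 : ℝ) * x ^ 12 + (-112554225/64 : ℝ) * x ^ 13 + (87434235/128 : ℝ) * x ^ 14 + (-3172995/16 : ℝ) * x ^ 15 + (324135/8 : ℝ) * x ^ 16 + (-10395/2 : ℝ) * x ^ 17 + (315 : ℝ) * x ^ 18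


lemma iDW_open {f : ℝ → ℝ} {s : Set ℝ} {x : ℝ} (n : ℕ) (hs : IsOpen s) (hx : x ∈ s) :
    iteratedDerivWithin n f s x = iteratedDeriv n f x := by
  simp only [iteratedDerivWithin, iteratedDeriv, iteratedFDerivWithin_of_isOpen n hs hx]

lemma mystep {y f g : ℝ → ℝ} {s : Set ℝ} (hs : IsOpen s) (k : ℕ)
    (Hk : ∀ x ∈ s, iteratedDeriv k y x = f x)
    (hfg : ∀ x ∈ s, HasDerivAt f (g x) x) :
    ∀ x ∈ s, iteratedDeriv (k+1) y x = g x := by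
  intro x hx
  have hev : iteratedDeriv k y =ᶠ[nhds x] f :=
    Filter.eventuallyEq_of_mem (hs.mem_nhds hx) Hk
  rw [iteratedDeriv_succ, hev.deriv_eq]
  exact (hfg x hx).deriv

set_option maxHeartbeats 4000000 in
theorem stmt0 (a b : ℝ) (hab : a < b) (y : ℝ → ℝ)
    (hy : ContDiffOn ℝ (⊤ : ℕ∞) y (Set.Ioo a b))
    (hcurve : ∀ x ∈ Set.Ioo a b, (y x) ^ 2 + x * (x - 1) ^ 3 = 0)
    (hne : ∀ x ∈ Set.Ioo a b, y x ≠ 0) :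
    ∀ x ∈ Set.Ioo a b, Eode y (Set.Ioo a b) x = 0 := by
  have hs : IsOpen (Set.Ioo a b) := isOpen_Ioo
  have hQ : ∀ x ∈ Set.Ioo a b, y x ^ 2 = -(x * (x - 1) ^ 3) := fun x hx => by
    have := hcurve x hx; linarith
  have hyd : ∀ x ∈ Set.Ioo a b, DifferentiableAt ℝ y x := fun x hx =>
    (hy.contDiffAt (hs.mem_nhds hx)).differentiableAt (by simp)
  have H1 : ∀ x ∈ Set.Ioo a b, HasDerivAt y (Rp1 x / y x) x := by
    intro x hx
    have hd := (hyd x hx).hasDerivAt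
    have hcub : HasDerivAt (fun t : ℝ => t * (t - 1) ^ 3)
        (1 * (x - 1) ^ 3 + x * ((3:ℕ) * (x - 1) ^ 2 * 1)) x := by
      have h1 : HasDerivAt (fun t : ℝ => (t - 1) ^ 3) ((3:ℕ) * (x - 1) ^ 2 * 1) x :=
        ((hasDerivAt_id' (x := x)).sub_const 1).pow 3
      exact (hasDerivAt_id' (x := x)).mul h1
    have hF : HasDerivAt (fun t => y t ^ 2 + t * (t - 1) ^ 3)
        ((2:ℕ) * y x ^ 1 * deriv y x + (1 * (x - 1) ^ 3 + x * ((3:ℕ) * (x - 1) ^ 2 * 1))) x :=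
      (hd.pow 2).add hcub
    have hF0 : HasDerivAt (fun t => y t ^ 2 + t * (t - 1) ^ 3) 0 x := by
      have hev : (fun t => y t ^ 2 + t * (t - 1) ^ 3) =ᶠ[nhds x] (fun _ => (0:ℝ)) :=
        Filter.eventuallyEq_of_mem (hs.mem_nhds hx) hcurve
      exact (hasDerivAt_const x (0:ℝ)).congr_of_eventuallyEq hev
    have heq := hF.unique hF0
    have hy0 := hne x hx
    have hdval : deriv y x = Rp1 x / y x := by
      push_cast at heq
      field_simp [Rp1]
      unfold Rp1; linear_combination heq / 2
    rw [← hdval]; exact hd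
  have E1 : ∀ x ∈ Set.Ioo a b, iteratedDeriv 1 y x = Rp1 x / y x ^ 1 := by
    intro x hx
    simpa [pow_one] using (H1 x hx).deriv

  have D1 : ∀ x ∈ Set.Ioo a b, HasDerivAt (fun t => Rp1 t / y t ^ 1) (Rp2 x / y x ^ 3) x := by
    intro x hx
    have hy0 := hne x hx
    have hq := hQ x hx
    have hdy := H1 x hx
    have hnum : HasDerivAt (fun t : ℝ => Rp1 t) ((-3 : ℝ) + (9 : ℝ) * x ^ 1 + (-6 : ℝ) * x ^ 2) x := by
      have h := ((((hasDerivAt_const x (1/2 : ℝ)).add ((hasDerivAt_pow 1 x).const_mul (-3 : ℝ))).add ((hasDerivAt_pow 2 x).const_mul (9/2 : ℝ))).add ((hasDerivAt_pow 3 x).const_mul (-2 : ℝ)))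
      unfold Rp1
      refine h.congr_deriv ?_
      push_cast
      ring
    have hden : HasDerivAt (fun t => y t ^ 1) ((1:ℕ) * y x ^ 0 * (Rp1 x / y x)) x :=
      hdy.pow 1
    have hdiv := hnum.div hden (pow_ne_zero 1 hy0)
    have hpoly : Rp2 x = ((-3 : ℝ) + (9 : ℝ) * x ^ 1 + (-6 : ℝ) * x ^ 2) * (y x ^ 2) - (1 : ℝ) * Rp1 x * Rp1 x := by
      rw [hq]; unfold Rp2 Rp1; ring
    refine hdiv.congr_deriv ?_
    rw [hpoly]
    push_cast
    field_simp
  have E2 : ∀ x ∈ Set.Ioo a b, iteratedDeriv 2 y x = Rp2 x / y x ^ 3 :=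
    mystep hs 1 E1 D1

  have D2 : ∀ x ∈ Set.Ioo a b, HasDerivAt (fun t => Rp2 t / y t ^ 3) (Rp3 x / y x ^ 5) x := by
    intro x hx
    have hy0 := hne x hx
    have hq := hQ x hx
    have hdy := H1 x hx
    have hnum : HasDerivAt (fun t : ℝ => Rp2 t) ((0 : ℝ) + (9 : ℝ) * x ^ 1 + (-39 : ℝ) * x ^ 2 + (63 : ℝ) * x ^ 3 + (-45 : ℝ) * x ^ 4 + (12 : ℝ) * x ^ 5) x := by
      have h := ((((((hasDerivAt_const x (-1/4 : ℝ)).add ((hasDerivAt_pow 2 x).const_mul (9/2 : ℝ))).add ((hasDerivAt_pow 3 x).const_mul (-13 : ℝ))).add ((hasDerivAt_pow 4 x).const_mul (63/4 : ℝ))).add ((hasDerivAt_pow 5 x).const_mul (-9 : ℝ))).add ((hasDerivAt_pow 6 x).const_mul (2 : ℝ)))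
      unfold Rp2
      refine h.congr_deriv ?_
      push_cast
      ring
    have hden : HasDerivAt (fun t => y t ^ 3) ((3:ℕ) * y x ^ 2 * (Rp1 x / y x)) x :=
      hdy.pow 3
    have hdiv := hnum.div hden (pow_ne_zero 3 hy0)
    have hpoly : Rp3 x = ((0 : ℝ) + (9 : ℝ) * x ^ 1 + (-39 : ℝ) * x ^ 2 + (63 : ℝ) * x ^ 3 + (-45 : ℝ) * x ^ 4 + (12 : ℝ) * x ^ 5) * (y x ^ 2) - (3 : ℝ) * Rp2 x * Rp1 x := by
      rw [hq]; unfold Rp3 Rp2 Rp1; ring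
    refine hdiv.congr_deriv ?_
    rw [hpoly]
    push_cast
    field_simp
  have E3 : ∀ x ∈ Set.Ioo a b, iteratedDeriv 3 y x = Rp3 x / y x ^ 5 :=
    mystep hs 2 E2 D2

  have D3 : ∀ x ∈ Set.Ioo a b, HasDerivAt (fun t => Rp3 t / y t ^ 5) (Rp4 x / y x ^ 7) x := by
    intro x hx
    have hy0 := hne x hx
    have hq := hQ x hx
    have hdy := H1 x hx
    have hnum : HasDerivAt (fun t : ℝ => Rp3 t) ((-9/4 : ℝ) + (45/4 : ℝ) * x ^ 1 + (-45/2 : ℝ) * x ^ 2 + (45/2 : ℝ) * x ^ 3 + (-45/4 : ℝ) * x ^ 4 + (9/4 : ℝ) * x ^ 5) x := by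
      have h := (((((((hasDerivAt_const x (3/8 : ℝ)).add ((hasDerivAt_pow 1 x).const_mul (-9/4 : ℝ))).add ((hasDerivAt_pow 2 x).const_mul (45/8 : ℝ))).add ((hasDerivAt_pow 3 x).const_mul (-15/2 : ℝ))).add ((hasDerivAt_pow 4 x).const_mul (45/8 : ℝ))).add ((hasDerivAt_pow 5 x).const_mul (-9/4 : ℝ))).add ((hasDerivAt_pow 6 x).const_mul (3/8 : ℝ)))
      unfold Rp3
      refine h.congr_deriv ?_
      push_cast
      ring
    have hden : HasDerivAt (fun t => y t ^ 5) ((5:ℕ) * y x ^ 4 * (Rp1 x / y x)) x :=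
      hdy.pow 5
    have hdiv := hnum.div hden (pow_ne_zero 5 hy0)
    have hpoly : Rp4 x = ((-9/4 : ℝ) + (45/4 : ℝ) * x ^ 1 + (-45/2 : ℝ) * x ^ 2 + (45/2 : ℝ) * x ^ 3 + (-45/4 : ℝ) * x ^ 4 + (9/4 : ℝ) * x ^ 5) * (y x ^ 2) - (5 : ℝ) * Rp3 x * Rp1 x := by
      rw [hq]; unfold Rp4 Rp3 Rp1; ring
    refine hdiv.congr_deriv ?_
    rw [hpoly]
    push_cast
    field_simp
  have E4 : ∀ x ∈ Set.Ioo a b, iteratedDeriv 4 y x = Rp4 x / y x ^ 7 :=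
    mystep hs 3 E3 D3

  have D4 : ∀ x ∈ Set.Ioo a b, HasDerivAt (fun t => Rp4 t / y t ^ 7) (Rp5 x / y x ^ 9) x := by
    intro x hx
    have hy0 := hne x hx
    have hq := hQ x hx
    have hdy := H1 x hx
    have hnum : HasDerivAt (fun t : ℝ => Rp4 t) ((9 : ℝ) + (-153/2 : ℝ) * x ^ 1 + (567/2 : ℝ) * x ^ 2 + (-1197/2 : ℝ) * x ^ 3 + (1575/2 : ℝ) * x ^ 4 + (-1323/2 : ℝ) * x ^ 5 + (693/2 : ℝ) * x ^ 6 + (-207/2 : ℝ) * x ^ 7 + (27/2 : ℝ) * x ^ 8) x := by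
      have h := ((((((((((hasDerivAt_const x (-15/16 : ℝ)).add ((hasDerivAt_pow 1 x).const_mul (9 : ℝ))).add ((hasDerivAt_pow 2 x).const_mul (-153/4 : ℝ))).add ((hasDerivAt_pow 3 x).const_mul (189/2 : ℝ))).add ((hasDerivAt_pow 4 x).const_mul (-1197/8 : ℝ))).add ((hasDerivAt_pow 5 x).const_mul (315/2 : ℝ))).add ((hasDerivAt_pow 6 x).const_mul (-441/4 : ℝ))).add ((hasDerivAt_pow 7 x).const_mul (99/2 : ℝ))).add ((hasDerivAt_pow 8 x).const_mul (-207/16 : ℝ))).add ((hasDerivAt_pow 9 x).const_mul (3/2 : ℝ)))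
      unfold Rp4
      refine h.congr_deriv ?_
      push_cast
      ring
    have hden : HasDerivAt (fun t => y t ^ 7) ((7:ℕ) * y x ^ 6 * (Rp1 x / y x)) x :=
      hdy.pow 7
    have hdiv := hnum.div hden (pow_ne_zero 7 hy0)
    have hpoly : Rp5 x = ((9 : ℝ) + (-153/2 : ℝ) * x ^ 1 + (567/2 : ℝ) * x ^ 2 + (-1197/2 : ℝ) * x ^ 3 + (1575/2 : ℝ) * x ^ 4 + (-1323/2 : ℝ) * x ^ 5 + (693/2 : ℝ) * x ^ 6 + (-207/2 : ℝ) * x ^ 7 + (27/2 : ℝ) * x ^ 8) * (y x ^ 2) - (7 : ℝ) * Rp4 x * Rp1 x := by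
      rw [hq]; unfold Rp5 Rp4 Rp1; ring
    refine hdiv.congr_deriv ?_
    rw [hpoly]
    push_cast
    field_simp
  have E5 : ∀ x ∈ Set.Ioo a b, iteratedDeriv 5 y x = Rp5 x / y x ^ 9 :=
    mystep hs 4 E4 D4

  have D5 : ∀ x ∈ Set.Ioo a b, HasDerivAt (fun t => Rp5 t / y t ^ 9) (Rp6 x / y x ^ 11) x := by
    intro x hx
    have hy0 := hne x hx
    have hq := hQ x hx
    have hdy := H1 x hx
    have hnum : HasDerivAt (fun t : ℝ => Rp5 t) ((-675/16 : ℝ) + (7965/16 : ℝ) * x ^ 1 + (-21375/8 : ℝ) * x ^ 2 + (34425/4 : ℝ) * x ^ 3 + (-147825/8 : ℝ) * x ^ 4 + (222075/8 : ℝ) * x ^ 5 + (-59535/2 : ℝ) * x ^ 6 + (91125/4 : ℝ) * x ^ 7 + (-195075/16 : ℝ) * x ^ 8 + (69525/16 : ℝ) * x ^ 9 + (-7425/8 : ℝ) * x ^ 10 + (90 : ℝ) * x ^ 11) x := by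
      have h := (((((((((((((hasDerivAt_const x (105/32 : ℝ)).add ((hasDerivAt_pow 1 x).const_mul (-675/16 : ℝ))).add ((hasDerivAt_pow 2 x).const_mul (7965/32 : ℝ))).add ((hasDerivAt_pow 3 x).const_mul (-7125/8 : ℝ))).add ((hasDerivAt_pow 4 x).const_mul (34425/16 : ℝ))).add ((hasDerivAt_pow 5 x).const_mul (-29565/8 : ℝ))).add ((hasDerivAt_pow 6 x).const_mul (74025/16 : ℝ))).add ((hasDerivAt_pow 7 x).const_mul (-8505/2 : ℝ))).add ((hasDerivAt_pow 8 x).const_mul (91125/32 : ℝ))).add ((hasDerivAt_pow 9 x).const_mul (-21675/16 : ℝ))).add ((hasDerivAt_pow 10 x).const_mul (13905/32 : ℝ))).add ((hasDerivAt_pow 11 x).const_mul (-675/8 : ℝ))).add ((hasDerivAt_pow 12 x).const_mul (15/2 : ℝ)))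
      unfold Rp5
      refine h.congr_deriv ?_
      push_cast
      ring
    have hden : HasDerivAt (fun t => y t ^ 9) ((9:ℕ) * y x ^ 8 * (Rp1 x / y x)) x :=
      hdy.pow 9
    have hdiv := hnum.div hden (pow_ne_zero 9 hy0)
    have hpoly : Rp6 x = ((-675/16 : ℝ) + (7965/16 : ℝ) * x ^ 1 + (-21375/8 : ℝ) * x ^ 2 + (34425/4 : ℝ) * x ^ 3 + (-147825/8 : ℝ) * x ^ 4 + (222075/8 : ℝ) * x ^ 5 + (-59535/2 : ℝ) * x ^ 6 + (91125/4 : ℝ) * x ^ 7 + (-195075/16 : ℝ) * x ^ 8 + (69525/16 : ℝ) * x ^ 9 + (-7425/8 : ℝ) * x ^ 10 + (90 : ℝ) * x ^ 11) * (y x ^ 2) - (9 : ℝ) * Rp5 x * Rp1 x := by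
      rw [hq]; unfold Rp6 Rp5 Rp1; ring
    refine hdiv.congr_deriv ?_
    rw [hpoly]
    push_cast
    field_simp
  have E6 : ∀ x ∈ Set.Ioo a b, iteratedDeriv 6 y x = Rp6 x / y x ^ 11 :=
    mystep hs 5 E5 D5

  have D6 : ∀ x ∈ Set.Ioo a b, HasDerivAt (fun t => Rp6 t / y t ^ 11) (Rp7 x / y x ^ 13) x := by
    intro x hx
    have hy0 := hne x hx
    have hq := hQ x hx
    have hdy := H1 x hx
    have hnum : HasDerivAt (fun t : ℝ => Rp6 t) ((945/4 : ℝ) + (-56565/16 : ℝ) * x ^ 1 + (393795/16 : ℝ) * x ^ 2 + (-1690335/16 : ℝ) * x ^ 3 + (4997025/16 : ℝ) * x ^ 4 + (-5380155/8 : ℝ) * x ^ 5 + (8700615/8 : ℝ) * x ^ 6 + (-10732095/8 : ℝ) * x ^ 7 + (10144035/8 : ℝ) * x ^ 8 + (-14619825/16 : ℝ) * x ^ 9 + (7904655/16 : ℝ) * x ^ 10 + (-3108915/16 : ℝ) * x ^ 11 + (840645/16 : ℝ) * x ^ 12 + (-34965/4 : ℝ) * x ^ 13 + (675 : ℝ)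 * x ^ 14) x := by
      have h := ((((((((((((((((hasDerivAt_const x (-945/64 : ℝ)).add ((hasDerivAt_pow 1 x).const_mul (945/4 : ℝ))).add ((hasDerivAt_pow 2 x).const_mul (-56565/32 : ℝ))).add ((hasDerivAt_pow 3 x).const_mul (131265/16 : ℝ))).add ((hasDerivAt_pow 4 x).const_mul (-1690335/64 : ℝ))).add ((hasDerivAt_pow 5 x).const_mul (999405/16 : ℝ))).add ((hasDerivAt_pow 6 x).const_mul (-1793385/16 : ℝ))).add ((hasDerivAt_pow 7 x).const_mul (1242945/8 : ℝ))).add ((hasDerivAt_pow 8 x).const_mul (-10732095/64 : ℝ))).add ((hasDerivAt_pow 9 x).const_mul (1127115/8 : ℝ))).add ((hasDerivAt_pow 10 x).const_mul (-2923965/32 : ℝ))).add ((hasDerivAt_pow 11 x).const_mul (718605/16 : ℝ))).add ((hasDerivAt_pow 12 x).const_mul (-1036305/64 : ℝ))).add ((hasDerivAt_pow 13 x).const_mul (64665/16 : ℝ))).add ((hasDerivAt_pow 14 x).const_mul (-4995/8 : ℝ))).add ((hasDerivAt_pow 15 x).const_mul (45 : ℝ)))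
      unfold Rp6
      refine h.congr_deriv ?_
      push_cast
      ring
    have hden : HasDerivAt (fun t => y t ^ 11) ((11:ℕ) * y x ^ 10 * (Rp1 x / y x)) x :=
      hdy.pow 11
    have hdiv := hnum.div hden (pow_ne_zero 11 hy0)
    have hpoly : Rp7 x = ((945/4 : ℝ) + (-56565/16 : ℝ) * x ^ 1 + (393795/16 : ℝ) * x ^ 2 + (-1690335/16 : ℝ) * x ^ 3 + (4997025/16 : ℝ) * x ^ 4 + (-5380155/8 : ℝ) * x ^ 5 + (8700615/8 : ℝ) * x ^ 6 + (-10732095/8 : ℝ) * x ^ 7 + (10144035/8 : ℝ) * x ^ 8 + (-14619825/16 : ℝ) * x ^ 9 + (7904655/16 : ℝ) * x ^ 10 + (-3108915/16 : ℝ) * x ^ 11 + (840645/16 : ℝ) * x ^ 12 + (-34965/4 : ℝ) * x ^ 13 + (675 : ℝ) * x ^ 14) * (y x ^ 2) - (11 : ℝ) * Rp6 x * Rp1 x := by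
      rw [hq]; unfold Rp7 Rp6 Rp1; ring
    refine hdiv.congr_deriv ?_
    rw [hpoly]
    push_cast
    field_simp
  have E7 : ∀ x ∈ Set.Ioo a b, iteratedDeriv 7 y x = Rp7 x / y x ^ 13 :=
    mystep hs 6 E6 D6

  intro x hx
  have hy0 := hne x hx
  unfold Eode
  rw [iDW_open 3 hs hx, iDW_open 4 hs hx, iDW_open 5 hs hx, iDW_open 6 hs hx,
    iDW_open 7 hs hx, E3 x hx, E4 x hx, E5 x hx, E6 x hx, E7 x hx]
  unfold Rp3 Rp4 Rp5 Rp6 Rp7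
  field_simp
  ring
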